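/- Let m ≥ 2 be an integer and ω ∈ (0, m−1] irrational, with digits bₙ, iterates τ_m^n(ω), and continuants pₙ, qₙ. Then for all n ≥ 1, |ω − pₙ/qₙ| = m^{b₁+⋯+bₙ} / (qₙ · (qₙ₊₁ + τ_m^{n+1}(ω)·m^{bₙ₊₁}·qₙ)). -/

import Mathlib

/-!
Write `x n = τ_m^n(ω)` and `A n = m^{bₙ}`. The identity `x n (1 + x (n+1)) A (n+1) = 1` lets one
expand `ω` step by step with tail `x (n+1)`, and induction gives
`ω = (pₙ₊₁ + x (n+1) Aₙ₊₁ pₙ) / (qₙ₊₁ + x (n+1) Aₙ₊₁ qₙ)`. Subtracting `pₙ/qₙ` and using the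
determinant identity `pₙ₊₁qₙ - qₙ₊₁pₙ = (-1)ⁿ A₁⋯Aₙ` gives the error formula. Irrationality of `ω`
keeps every iterate positive, which the identity needs.
-/

open Finset

noncomputable def b1 (m : ℕ) (x : ℝ) : ℤ := ⌊Real.log x⁻¹ / Real.log m⌋

noncomputable def tau (m : ℕ) (x : ℝ) : ℝ :=
  (m : ℝ) ^ (Real.log x⁻¹ / Real.log m - (b1 m x : ℝ)) - 1

noncomputable def digit (m : ℕ) (ω : ℝ) (n : ℕ) : ℤ := b1 m ((tau m)^[n - 1] ω)

lemma Finset.prod_zpow_eq_zpow_sum {ι G : Type*} [CommGroupWithZero G] {a : G} (ha : a ≠ 0)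
    (s : Finset ι) (f : ι → ℤ) : ∏ i ∈ s, a ^ f i = a ^ ∑ i ∈ s, f i :=
  s.cons_induction (by simp) fun _ _ _ ih => by rw [prod_cons, sum_cons, zpow_add₀ ha, ih]

section Tau

variable {m : ℕ}

lemma tau_nonneg (hm : 1 ≤ m) (y : ℝ) : 0 ≤ tau m y := by
  have hexp : 0 ≤ Real.log y⁻¹ / Real.log m - (b1 m y : ℝ) := sub_nonneg.2 (Int.floor_le _)
  have := Real.one_le_rpow (by exact_mod_cast hm : (1 : ℝ) ≤ m) hexp
  unfold tau
  linarith

lemma mul_one_add_tau_mul_zpow_b1 (hm : 1 < m) {y : ℝ} (hy : 0 < y) :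
    y * (1 + tau m y) * (m : ℝ) ^ b1 m y = 1 := by
  have hm0 : (0 : ℝ) < m := by positivity
  have hlog : Real.log m ≠ 0 := (Real.log_pos (by exact_mod_cast hm)).ne'
  have hpow : (m : ℝ) ^ (Real.log y⁻¹ / Real.log m) = y⁻¹ := by
    rw [Real.rpow_def_of_pos hm0, mul_div_cancel₀ _ hlog, Real.exp_log (inv_pos.2 hy)]
  have h1 : 1 + tau m y = y⁻¹ / (m : ℝ) ^ b1 m y := by
    rw [tau, add_sub_cancel, Real.rpow_sub hm0, Real.rpow_intCast, hpow]
  rw [h1]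
  field_simp

lemma irrational_tau (hm : 1 < m) {y : ℝ} (hy : Irrational y) (hy0 : 0 < y) :
    Irrational (tau m y) := by
  have hm0 : (m : ℚ) ≠ 0 := by positivity
  have htau : tau m y = (((m : ℚ) ^ (-b1 m y) : ℚ) : ℝ) / y - 1 := by
    have := mul_one_add_tau_mul_zpow_b1 hm hy0
    push_cast
    rw [zpow_neg]
    field_simp
    linear_combination this
  rw [htau]
  exact_mod_cast (hy.ratCast_div (zpow_ne_zero _ hm0)).sub_intCast 1

lemma iterate_tau_pos_and_irrational (hm : 1 < m) {ω : ℝ} (hω : Irrational ω) (hω0 : 0 < ω) :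
    ∀ n, 0 < (tau m)^[n] ω ∧ Irrational ((tau m)^[n] ω)
  | 0 => ⟨hω0, hω⟩
  | n + 1 => by
    obtain ⟨hpos, hirr⟩ := iterate_tau_pos_and_irrational hm hω hω0 n
    have hirr' := irrational_tau hm hirr hpos
    rw [Function.iterate_succ_apply']
    exact ⟨(tau_nonneg hm.le _).lt_of_ne' hirr'.ne_zero, hirr'⟩

end Tau

def ContinuantRec (A u : ℕ → ℝ) : Prop :=
  ∀ n, u (n + 2) = A (n + 2) * u (n + 1) + A (n + 1) * u n

namespace ContinuantRec

variable {A p q : ℕ → ℝ}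

lemma pos (hq : ContinuantRec A q) (hA : ∀ n, 0 < A n) (hq0 : 0 < q 0) (hq1 : 0 < q 1) :
    ∀ n, 0 < q n
  | 0 => hq0
  | 1 => hq1
  | n + 2 => by
    rw [hq n]
    have := hq.pos hA hq0 hq1 n
    have := hq.pos hA hq0 hq1 (n + 1)
    have := hA (n + 1)
    have := hA (n + 2)
    positivity

lemma det (hp : ContinuantRec A p) (hq : ContinuantRec A q)
    (hp0 : p 0 = 0) (hq0 : q 0 = 1) (hp1 : p 1 = 1) (n : ℕ) :
    p (n + 1) * q n - q (n + 1) * p n = (-1) ^ n * ∏ k ∈ Icc 1 n, A k := by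
  induction n with
  | zero => simp [hp0, hq0, hp1]
  | succ n ih =>
    rw [hp n, hq n, prod_Icc_succ_top (by omega)]
    linear_combination -A (n + 1) * ih

variable {x : ℕ → ℝ} {ω : ℝ}

lemma mul_add_tail_eq (hp : ContinuantRec A p) (hq : ContinuantRec A q)
    (hp0 : p 0 = 0) (hq0 : q 0 = 1) (hp1 : p 1 = 1) (hq1 : q 1 = A 1)
    (hx0 : x 0 = ω) (hx : ∀ n, x n * (1 + x (n + 1)) * A (n + 1) = 1) (n : ℕ) :
    ω * (q (n + 1) + x (n + 1) * A (n + 1) * q n) = p (n + 1) + x (n + 1) * A (n + 1) * p n := by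
  induction n with
  | zero =>
    rw [hp0, hq0, hp1, hq1, ← hx0]
    linear_combination hx 0
  | succ n ih =>
    rw [hp n, hq n]
    linear_combination A (n + 2) * (1 + x (n + 2)) * ih + A (n + 1) * (p n - ω * q n) * hx (n + 1)

lemma abs_sub_div_eq (hp : ContinuantRec A p) (hq : ContinuantRec A q)
    (hp0 : p 0 = 0) (hq0 : q 0 = 1) (hp1 : p 1 = 1) (hq1 : q 1 = A 1) (hA : ∀ n, 0 < A n)
    (hx0 : x 0 = ω) (hx : ∀ n, x n * (1 + x (n + 1)) * A (n + 1) = 1) (hx_nonneg : ∀ n, 0 ≤ x n)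
    (n : ℕ) :
    |ω - p n / q n| = (∏ k ∈ Icc 1 n, A k) / (q n * (q (n + 1) + x (n + 1) * A (n + 1) * q n)) := by
  have hqpos := hq.pos hA (by rw [hq0]; exact one_pos) (by rw [hq1]; exact hA 1)
  have hD : 0 < q (n + 1) + x (n + 1) * A (n + 1) * q n := by
    have := hx_nonneg (n + 1)
    have := hA (n + 1)
    have := hqpos n
    have := hqpos (n + 1)
    positivity
  have hsub : ω - p n / q n =
      (-1) ^ n * (∏ k ∈ Icc 1 n, A k) / (q n * (q (n + 1) + x (n + 1) * A (n + 1) * q n)) := by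
    have hqn := (hqpos n).ne'
    rw [eq_div_iff (mul_ne_zero hqn hD.ne')]
    field_simp
    linear_combination q n * hp.mul_add_tail_eq hq hp0 hq0 hp1 hq1 hx0 hx n
      + hp.det hq hp0 hq0 hp1 n
  rw [hsub, abs_div, abs_mul, abs_neg_one_pow, one_mul, abs_of_pos (prod_pos fun k _ => hA k),
    abs_of_pos (mul_pos (hqpos n) hD)]

end ContinuantRec

theorem abs_error_formula_general (m : ℕ) (hm : 2 ≤ m) (ω : ℝ) (hω : Irrational ω) (hω0 : 0 < ω)
    (p q : ℕ → ℝ)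
    (hp0 : p 0 = 0) (hq0 : q 0 = 1) (hp1 : p 1 = 1) (hq1 : q 1 = (m : ℝ) ^ (digit m ω 1))
    (hp : ∀ n, 2 ≤ n → p n = (m : ℝ) ^ (digit m ω n) * p (n - 1) + (m : ℝ) ^ (digit m ω (n - 1)) * p (n - 2))
    (hq : ∀ n, 2 ≤ n → q n = (m : ℝ) ^ (digit m ω n) * q (n - 1) + (m : ℝ) ^ (digit m ω (n - 1)) * q (n - 2)) :
    ∀ n, 1 ≤ n →
      |ω - p n / q n| =
        (m : ℝ) ^ (∑ k ∈ Finset.Icc 1 n, digit m ω k) /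
          (q n * (q (n + 1) + (tau m)^[n + 1] ω * (m : ℝ) ^ (digit m ω (n + 1)) * q n)) := by
  intro n _
  have hm0 : (0 : ℝ) < m := by positivity
  have hpA : ContinuantRec (fun k => (m : ℝ) ^ digit m ω k) p := fun k => hp (k + 2) (by omega)
  have hqA : ContinuantRec (fun k => (m : ℝ) ^ digit m ω k) q := fun k => hq (k + 2) (by omega)
  have hx (k : ℕ) :
      (tau m)^[k] ω * (1 + (tau m)^[k + 1] ω) * (m : ℝ) ^ digit m ω (k + 1) = 1 := by
    rw [Function.iterate_succ_apply']
    exact mul_one_add_tau_mul_zpow_b1 hm (iterate_tau_pos_and_irrational hm hω hω0 k).1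
  rw [← prod_zpow_eq_zpow_sum hm0.ne']
  exact hpA.abs_sub_div_eq hqA hp0 hq0 hp1 hq1 (fun k => zpow_pos hm0 _) rfl hx
    (fun k => (iterate_tau_pos_and_irrational hm hω hω0 k).1.le) n

theorem abs_error_formula (m : ℕ) (hm : 2 ≤ m) (ω : ℝ) (hω : Irrational ω) (hω0 : 0 < ω) (hω1 : ω ≤ (m : ℝ) - 1)
    (p q : ℕ → ℝ)
    (hp0 : p 0 = 0) (hq0 : q 0 = 1) (hp1 : p 1 = 1) (hq1 : q 1 = (m : ℝ) ^ (digit m ω 1))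
    (hp : ∀ n, 2 ≤ n → p n = (m : ℝ) ^ (digit m ω n) * p (n - 1) + (m : ℝ) ^ (digit m ω (n - 1)) * p (n - 2))
    (hq : ∀ n, 2 ≤ n → q n = (m : ℝ) ^ (digit m ω n) * q (n - 1) + (m : ℝ) ^ (digit m ω (n - 1)) * q (n - 2)) :
    ∀ n, 1 ≤ n →
      |ω - p n / q n| =
        (m : ℝ) ^ (∑ k ∈ Finset.Icc 1 n, digit m ω k) /
          (q n * (q (n + 1) + (tau m)^[n + 1] ω * (m : ℝ) ^ (digit m ω (n + 1)) * q n)) :=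
  abs_error_formula_general m hm ω hω hω0 p q hp0 hq0 hp1 hq1 hp hq
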